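/- Let x ∈ l^2 with x_n < 0 for at most finitely many n, and let X be any global solution of the inviscid dyadic model with X(0) = x. Then the energy of X is non-increasing on [0,∞): E(t) ≤ E(s) for all 0 ≤ s ≤ t. -/

import Mathlib

open MeasureTheory Set Filter Topology

/-- `X` is a solution of the inviscid dyadic model on the time set `D`
(typically `Set.Ico 0 T` or `Set.Ici 0`), with coefficients `k` bounded by `C * 2 ^ n`.
The components of the solution are `X 1, X 2, ...`; by convention `X 0 ≡ 0` and `k 0 = 0`. -/
def IsDyadicSolutionOn (C : ℝ) (k : ℕ → ℝ) (X : ℕ → ℝ → ℝ) (D : Set ℝ) : Prop :=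
  0 < C ∧ k 0 = 0 ∧
  (∀ n : ℕ, 1 ≤ n → 0 ≤ k n ∧ k n ≤ C * 2 ^ n) ∧
  (∀ t : ℝ, X 0 t = 0) ∧
  (∀ n : ℕ, 1 ≤ n → ∀ t ∈ D, HasDerivWithinAt (X n)
      (k (n - 1) * X (n - 1) t ^ 2 - k n * X n t * X (n + 1) t) D t) ∧
  (∀ t ∈ D, Summable fun j : ℕ => X (j + 1) t ^ 2)

/-- The energy `E(t) = ∑_{j ≥ 1} X_j(t)^2`. -/
noncomputable def energy (X : ℕ → ℝ → ℝ) (t : ℝ) : ℝ :=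
  ∑' j : ℕ, X (j + 1) t ^ 2

/-- The function `a(t) = sup_{n ≥ 1} (- k_n X_{n+1}(t))`. -/
noncomputable def classKfun (k : ℕ → ℝ) (X : ℕ → ℝ → ℝ) (t : ℝ) : ℝ :=
  ⨆ n : ℕ, -(k (n + 1) * X (n + 2) t)

/-- A solution is of class `K` if `a(t) = sup_{n ≥ 1} (- k_n X_{n+1}(t))` is locally
integrable on `[0,∞)`. -/
def IsClassK (k : ℕ → ℝ) (X : ℕ → ℝ → ℝ) : Prop :=
  LocallyIntegrableOn (classKfun k X) (Set.Ici 0)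

/-!
A component whose initial value is nonnegative stays nonnegative: it satisfies the linear
differential inequality `X_n' ≥ -(k_n X_{n+1}) X_n`, whose rate is bounded on compact time
intervals. So beyond the last negative initial component every `X_n` is nonnegative for all
times. The partial energies `E_N = ∑_{j ≤ N} X_j²` telescope to `E_N' = -2 k_N X_N² X_{N+1}`,
the flux from mode `N` into mode `N + 1`, which is therefore `≤ 0` for large `N`; letting
`N → ∞` gives the monotonicity of the energy.
-/

theorem nonneg_of_hasDerivWithinAt_nonneg_of_neg {f f' : ℝ → ℝ} {a b : ℝ}
    (hf : ContinuousOn f (Icc a b))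
    (hf' : ∀ t ∈ Ioo a b, HasDerivWithinAt f (f' t) (Ioo a b) t)
    (hneg : ∀ t ∈ Ioo a b, f t < 0 → 0 ≤ f' t) (ha : 0 ≤ f a) :
    ∀ t ∈ Icc a b, 0 ≤ f t := by
  intro x hx
  by_contra! hfx
  -- `τ` is the last time before `x` at which `f` is nonnegative.
  set A := Icc a x ∩ f ⁻¹' Ici 0
  have hAx : Icc a x ⊆ Icc a b := Icc_subset_Icc_right hx.2
  have hA_closed : IsClosed A :=
    (hf.mono hAx).preimage_isClosed_of_isClosed isClosed_Icc isClosed_Ici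
  have hA_bdd : BddAbove A := ⟨x, fun t ht => ht.1.2⟩
  have hτ : sSup A ∈ A := hA_closed.csSup_mem ⟨a, ⟨le_rfl, hx.1⟩, ha⟩ hA_bdd
  set τ := sSup A
  have hτx : τ < x := lt_of_le_of_ne hτ.1.2 fun h => (not_le.2 hfx) (h ▸ hτ.2)
  have hneg_after : ∀ t ∈ Ioo τ x, f t < 0 := fun t ht => by
    by_contra! h
    exact (le_csSup hA_bdd ⟨⟨hτ.1.1.trans ht.1.le, ht.2.le⟩, h⟩).not_gt ht.1
  have hsub : Ioo τ x ⊆ Ioo a b := Ioo_subset_Ioo hτ.1.1 hx.2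
  have hmono : MonotoneOn f (Icc τ x) := by
    refine monotoneOn_of_hasDerivWithinAt_nonneg (f' := f') (convex_Icc τ x)
      (hf.mono ((Icc_subset_Icc_left hτ.1.1).trans hAx)) ?_ ?_ <;> rw [interior_Icc]
    · exact fun t ht => (hf' t (hsub ht)).mono hsub
    · exact fun t ht => hneg t (hsub ht) (hneg_after t ht)
  have := hmono ⟨le_rfl, hτx.le⟩ ⟨hτx.le, le_rfl⟩ hτx.le
  linarith [show 0 ≤ f τ from hτ.2]

theorem nonneg_of_hasDerivWithinAt_ge_mul_of_neg {f f' : ℝ → ℝ} {a b M : ℝ}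
    (hf : ContinuousOn f (Icc a b))
    (hf' : ∀ t ∈ Ioo a b, HasDerivWithinAt f (f' t) (Ioo a b) t)
    (hneg : ∀ t ∈ Ioo a b, f t < 0 → M * f t ≤ f' t) (ha : 0 ≤ f a) :
    ∀ t ∈ Icc a b, 0 ≤ f t := by
  -- The integrating factor `exp (-M t)` turns `f' ≥ M f` into `(exp (-M t) f)' ≥ 0`.
  set w : ℝ → ℝ := fun t => Real.exp (-M * t)
  have hw_pos : ∀ t, 0 < w t := fun t => Real.exp_pos _
  have hw : ∀ t, HasDerivAt w (w t * -M) t := fun t => by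
    simpa [w, mul_comm] using ((hasDerivAt_id t).const_mul (-M)).exp
  have hwf := nonneg_of_hasDerivWithinAt_nonneg_of_neg (f := w * f)
    (f' := fun t => w t * (f' t - M * f t))
    ((Real.continuous_exp.comp (continuous_const.mul continuous_id)).continuousOn.mul hf)
    (fun t ht => ((hw t).hasDerivWithinAt.mul (hf' t ht)).congr_deriv (by ring))
    (fun t ht hneg_t => mul_nonneg (hw_pos t).le <| sub_nonneg.2 <|
      hneg t ht <| (pos_iff_neg_of_mul_neg hneg_t).1 (hw_pos t))
    (mul_nonneg (hw_pos a).le ha)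
  exact fun t ht => nonneg_of_mul_nonneg_right (hwf t ht) (hw_pos t)
noncomputable def partialEnergy (X : ℕ → ℝ → ℝ) (N : ℕ) (t : ℝ) : ℝ :=
  ∑ j ∈ Finset.range N, X (j + 1) t ^ 2

namespace IsDyadicSolutionOn

variable {C : ℝ} {k : ℕ → ℝ} {X : ℕ → ℝ → ℝ} {D : Set ℝ}

theorem coeff_nonneg (hX : IsDyadicSolutionOn C k X D) (n : ℕ) : 0 ≤ k n := by
  obtain ⟨-, hk0, hk, -⟩ := hX
  rcases Nat.eq_zero_or_pos n with rfl | hn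
  · exact hk0.ge
  · exact (hk n hn).1

theorem hasDerivWithinAt (hX : IsDyadicSolutionOn C k X D) {n : ℕ} (hn : 1 ≤ n) {t : ℝ}
    (ht : t ∈ D) :
    HasDerivWithinAt (X n) (k (n - 1) * X (n - 1) t ^ 2 - k n * X n t * X (n + 1) t) D t := by
  obtain ⟨-, -, -, -, hderiv, -⟩ := hX
  exact hderiv n hn t ht

theorem continuousOn (hX : IsDyadicSolutionOn C k X D) {n : ℕ} (hn : 1 ≤ n) :
    ContinuousOn (X n) D :=
  fun _ ht => (hX.hasDerivWithinAt hn ht).continuousWithinAt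

theorem nonneg_of_nonneg_initial (hX : IsDyadicSolutionOn C k X (Ici 0)) {n : ℕ} (hn : 1 ≤ n)
    (h0 : 0 ≤ X n 0) {t : ℝ} (ht : 0 ≤ t) : 0 ≤ X n t := by
  have hsub : Icc 0 t ⊆ Ici (0 : ℝ) := Icc_subset_Ici_self
  have hIoo : Ioo 0 t ⊆ Ici (0 : ℝ) := Ioo_subset_Icc_self.trans hsub
  obtain ⟨M, hM⟩ := isCompact_Icc.bddAbove_image
    (((hX.continuousOn (Nat.le_succ_of_le hn)).const_smul (k n)).neg.mono hsub)
  refine nonneg_of_hasDerivWithinAt_ge_mul_of_neg (M := M) ((hX.continuousOn hn).mono hsub)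
    (fun s hs => (hX.hasDerivWithinAt hn (hIoo hs)).mono hIoo) (fun s hs hneg => ?_) h0 t
    ⟨ht, le_rfl⟩
  have hrate : -(k n * X (n + 1) s) ≤ M := hM ⟨s, Ioo_subset_Icc_self hs, rfl⟩
  have := mul_le_mul_of_nonpos_right hrate hneg.le
  nlinarith [mul_nonneg (hX.coeff_nonneg (n - 1)) (sq_nonneg (X (n - 1) s))]

theorem hasDerivWithinAt_partialEnergy (hX : IsDyadicSolutionOn C k X D) (N : ℕ) {t : ℝ}
    (ht : t ∈ D) :
    HasDerivWithinAt (partialEnergy X N) (-(2 * k N * X N t ^ 2 * X (N + 1) t)) D t := by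
  induction N with
  | zero =>
    obtain ⟨-, hk0, -⟩ := hX
    have hzero : partialEnergy X 0 = fun _ => 0 := by ext; simp [partialEnergy]
    rw [hzero]
    exact (hasDerivWithinAt_const t D 0).congr_deriv (by simp [hk0])
  | succ N ih =>
    have hsucc : partialEnergy X (N + 1) = partialEnergy X N + X (N + 1) ^ 2 := by
      ext; simp [partialEnergy, Finset.sum_range_succ]
    rw [hsucc]
    refine (ih.add ((hX.hasDerivWithinAt (Nat.le_add_left 1 N) ht).pow 2)).congr_deriv ?_
    simp only [Nat.add_sub_cancel, Nat.cast_ofNat]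
    ring

theorem antitoneOn_partialEnergy (hX : IsDyadicSolutionOn C k X (Ici 0)) {N : ℕ}
    (hN : ∀ t, 0 ≤ t → 0 ≤ X (N + 1) t) : AntitoneOn (partialEnergy X N) (Ici 0) := by
  refine antitoneOn_of_hasDerivWithinAt_nonpos (convex_Ici 0)
    (f' := fun t => -(2 * k N * X N t ^ 2 * X (N + 1) t))
    (fun t ht => (hX.hasDerivWithinAt_partialEnergy N ht).continuousWithinAt) ?_ ?_ <;>
    rw [interior_Ici]
  · exact fun t ht => (hX.hasDerivWithinAt_partialEnergy N (Ioi_subset_Ici_self ht)).mono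
      Ioi_subset_Ici_self
  · intro t ht
    have := mul_nonneg (mul_nonneg (mul_nonneg zero_le_two (hX.coeff_nonneg N))
      (sq_nonneg (X N t))) (hN t (le_of_lt ht))
    linarith

theorem tendsto_partialEnergy (hX : IsDyadicSolutionOn C k X D) {t : ℝ} (ht : t ∈ D) :
    Tendsto (fun N => partialEnergy X N t) atTop (𝓝 (energy X t)) := by
  obtain ⟨-, -, -, -, -, hsum⟩ := hX
  exact (hsum t ht).hasSum.tendsto_sum_nat

end IsDyadicSolutionOn

/-- for any global solution whose initial condition has at most
finitely many negative components, the energy is non-increasing on `[0,∞)`. -/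
theorem energy_nonincreasing_of_Hplus_initial
    (C : ℝ) (k : ℕ → ℝ) (X : ℕ → ℝ → ℝ)
    (hX : IsDyadicSolutionOn C k X (Set.Ici 0))
    (hfin : {n : ℕ | X n 0 < 0}.Finite) :
    ∀ s t : ℝ, 0 ≤ s → s ≤ t → energy X t ≤ energy X s := by
  intro s t hs hst
  obtain ⟨m, hm⟩ := hfin.bddAbove
  have htail : ∀ n, m < n → ∀ u, 0 ≤ u → 0 ≤ X n u := fun n hn u hu =>
    hX.nonneg_of_nonneg_initial (by omega) (not_lt.1 fun h => (hm h).not_gt hn) hu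
  have hanti : ∀ N ≥ m, partialEnergy X N t ≤ partialEnergy X N s := fun N hN =>
    hX.antitoneOn_partialEnergy (htail (N + 1) (by omega)) hs (hs.trans hst) hst
  exact le_of_tendsto_of_tendsto (hX.tendsto_partialEnergy (mem_Ici.2 (hs.trans hst)))
    (hX.tendsto_partialEnergy (mem_Ici.2 hs)) (eventually_atTop.2 ⟨m, hanti⟩)
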